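/- arXiv:2504.21664 — 4 statements merged into one kernel-verified Lean document; each statement's English description precedes it below -/
import Mathlib

section
/- For every positive integer m, det E_m ≅ O_Φ(d·C(r+m-1, m-1) − (r+1)·C(r+m-1, m-2)) ⊗ π*O_G(C(r+m-1, m-2)), where C(a,−1) := 0 for a > 0. -/
/-- Binomial coefficient `C(a,b)` for an integer lower index, with `C(a,b) = 0`
for `b < 0`. -/
def chooseZ (a : ℕ) (b : ℤ) : ℤ := if 0 ≤ b then (a.choose b.toNat : ℤ) else 0

lemma chooseZ_neg {a : ℕ} {b : ℤ} (h : b < 0) : chooseZ a b = 0 := by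
  simp [chooseZ, not_le.mpr h]

lemma chooseZ_nonneg {a : ℕ} {b : ℤ} (h : 0 ≤ b) :
    chooseZ a b = (a.choose b.toNat : ℤ) := by simp [chooseZ, h]

lemma pascalZ (n : ℕ) (k : ℤ) (hk : 0 ≤ k) :
    chooseZ (n + 1) k = chooseZ n (k - 1) + chooseZ n k := by
  rcases eq_or_lt_of_le hk with h | h
  · simp [chooseZ, ← h, chooseZ_neg (show (0:ℤ) - 1 < 0 by norm_num)]
  · obtain ⟨j, rfl⟩ : ∃ j : ℕ, k = (j : ℤ) + 1 := by
      refine ⟨(k - 1).toNat, ?_⟩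
      omega
    rw [chooseZ_nonneg hk, chooseZ_nonneg (by omega : (0:ℤ) ≤ (j:ℤ)+1-1),
      chooseZ_nonneg (by positivity)]
    have h1 : ((j:ℤ) + 1).toNat = j + 1 := by omega
    have h2 : ((j:ℤ) + 1 - 1).toNat = j := by omega
    rw [h1, h2, Nat.choose_succ_succ]
    push_cast
    ring

/-- `det E_m ≅ O_Φ(d·C(r+m-1,m-1) - (r+1)·C(r+m-1,m-2)) ⊗ π*O_G(C(r+m-1,m-2))`,
where `C(a,-1) = 0`.  This is stated in the Picard group of `Φ` (written
additively), using `det E_1 = d • O_Φ(1)`, the recursion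
`det E_{m+1} = det E_m + d·rank(Sym^m Ω_{Φ/G}) • O_Φ(1) + det Sym^m(Ω_{Φ/G})`
coming from the exact sequences, together with
`det Sym^a(Ω_{Φ/G}) = O_Φ((-r-1)·C(r+a-1,a-1)) ⊗ π*O_G(C(r+a-1,a-1))` and
`rank Sym^a(Ω_{Φ/G}) = C(r+a-1,a)`. -/
theorem det_principal_parts
    (Pic : Type*) [AddCommGroup Pic]
    (OΦ OG : Pic)  -- classes of O_Φ(1) and π*O_G(1)
    (r : ℕ) (hr : 1 ≤ r) (d : ℤ)
    (detE detSym : ℕ → Pic) (rkSym : ℕ → ℕ)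
    (h1 : detE 1 = d • OΦ)
    (hrec : ∀ m, 1 ≤ m →
      detE (m + 1) = detE m + (d * (rkSym m : ℤ)) • OΦ + detSym m)
    (hdetSym : ∀ a, 1 ≤ a → detSym a =
      ((-(r : ℤ) - 1) * chooseZ (r + a - 1) ((a : ℤ) - 1)) • OΦ +
        chooseZ (r + a - 1) ((a : ℤ) - 1) • OG)
    (hrkSym : ∀ a, 1 ≤ a → (rkSym a : ℤ) = chooseZ (r + a - 1) (a : ℤ)) :
    ∀ m, 1 ≤ m → detE m =
      (d * chooseZ (r + m - 1) ((m : ℤ) - 1) -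
        ((r : ℤ) + 1) * chooseZ (r + m - 1) ((m : ℤ) - 2)) • OΦ +
      chooseZ (r + m - 1) ((m : ℤ) - 2) • OG := by
  intro m hm
  induction m, hm using Nat.le_induction with
  | base =>
    have e1 : chooseZ r 0 = 1 := by
      rw [chooseZ_nonneg le_rfl]; norm_num
    have e2 : chooseZ r (-1) = 0 := chooseZ_neg (by norm_num)
    push_cast
    rw [h1, e1, e2]
    simp
  | succ m hm ih =>
    have hrm : r + (m + 1) - 1 = (r + m - 1) + 1 := by omega
    have p1 : chooseZ (r + (m+1) - 1) (((m:ℤ)+1) - 1)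
        = chooseZ (r + m - 1) ((m:ℤ) - 1) + chooseZ (r + m - 1) (m:ℤ) := by
      rw [hrm]
      have := pascalZ (r + m - 1) (m : ℤ) (by positivity)
      simpa using this
    have p2 : chooseZ (r + (m+1) - 1) (((m:ℤ)+1) - 2)
        = chooseZ (r + m - 1) ((m:ℤ) - 2) + chooseZ (r + m - 1) ((m:ℤ) - 1) := by
      rw [hrm]
      have h' : (m:ℤ) + 1 - 2 = (m:ℤ) - 1 := by ring
      rw [h']
      have := pascalZ (r + m - 1) ((m : ℤ) - 1) (by omega)
      rw [show (m:ℤ) - 1 - 1 = (m:ℤ) - 2 by ring] at this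
      exact this
    rw [hrec m hm, hdetSym m hm, hrkSym m hm, ih]
    push_cast
    rw [p1, p2]
    module
end

section
/- The bundle E_m → Φ satisfies rank E_m = dim Φ and is relatively orientable if and only if: (i) r(n-r)+n = C(r+m-1, m-1); (ii) d·C(r+m-1, m-1) ≡ (r+1)(C(r+m-1, m-2) − 1) mod 2; and (iii) C(r+m-1, m-2) ≡ n mod 2. -/
/-- `E_m → Φ` satisfies `rank E_m = dim Φ` and is relatively orientable iff
(i) `r(n-r)+n = C(r+m-1,m-1)`,
(ii) `d·C(r+m-1,m-1) ≡ (r+1)(C(r+m-1,m-2) - 1) mod 2`, and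
(iii) `C(r+m-1,m-2) ≡ n mod 2`.
Here `Pic Φ ≅ ℤ × ℤ`, freely generated by `O_Φ(1) = (1,0)` and
`π*O_G(1) = (0,1)`; relative orientability of `E_m` means that
`det E_m + ω_Φ` is twice a class. -/
theorem principal_parts_rel_orientable_iff
    (r n m : ℕ) (d : ℤ) (hr : 1 ≤ r) (hm : 1 ≤ m) (hrn : r < n)
    (OΦ OG : ℤ × ℤ) (hOΦ : OΦ = (1, 0)) (hOG : OG = (0, 1))
    (detEm ωΦ : ℤ × ℤ)
    (hdet : detEm =
      (d * chooseZ (r + m - 1) ((m : ℤ) - 1) -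
        ((r : ℤ) + 1) * chooseZ (r + m - 1) ((m : ℤ) - 2)) • OΦ +
      chooseZ (r + m - 1) ((m : ℤ) - 2) • OG)
    (hω : ωΦ = (-((r : ℤ) + 1)) • OΦ + (-(n : ℤ)) • OG)
    (rkEm dimΦ : ℕ)
    (hrk : (rkEm : ℤ) = chooseZ (r + m - 1) ((m : ℤ) - 1))
    (hdim : dimΦ = r * (n - r) + n) :
    (rkEm = dimΦ ∧ ∃ L : ℤ × ℤ, detEm + ωΦ = 2 • L) ↔
      (((r * (n - r) + n : ℕ) : ℤ) = chooseZ (r + m - 1) ((m : ℤ) - 1) ∧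
        d * chooseZ (r + m - 1) ((m : ℤ) - 1) ≡
          ((r : ℤ) + 1) * (chooseZ (r + m - 1) ((m : ℤ) - 2) - 1) [ZMOD 2] ∧
        chooseZ (r + m - 1) ((m : ℤ) - 2) ≡ (n : ℤ) [ZMOD 2]) := by
  subst hOΦ hOG hdet hω hdim
  set A := chooseZ (r + m - 1) ((m : ℤ) - 1) with hA
  set B := chooseZ (r + m - 1) ((m : ℤ) - 2) with hB
  have hex : (∃ L : ℤ × ℤ,
      ((d * A - ((r : ℤ) + 1) * B) • ((1:ℤ), (0:ℤ)) + B • ((0:ℤ), (1:ℤ))) +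
        ((-((r : ℤ) + 1)) • ((1:ℤ), (0:ℤ)) + (-(n : ℤ)) • ((0:ℤ), (1:ℤ))) = 2 • L) ↔
      (2 ∣ (d * A - ((r : ℤ) + 1) * B + -((r : ℤ) + 1)) ∧ 2 ∣ (B + -(n : ℤ))) := by
    constructor
    · rintro ⟨⟨x, y⟩, h⟩
      simp [Prod.ext_iff, smul_eq_mul] at h
      exact ⟨⟨x, by linarith [h.1]⟩, ⟨y, by linarith [h.2]⟩⟩
    · rintro ⟨⟨x, hx⟩, ⟨y, hy⟩⟩
      exact ⟨(x, y), by simp [Prod.ext_iff, smul_eq_mul]; constructor <;> linarith⟩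
  rw [hex]
  have hrk' : rkEm = r * (n - r) + n ↔ ((r * (n - r) + n : ℕ) : ℤ) = A := by
    rw [← hrk]; omega
  rw [hrk']
  have hmul : ((r : ℤ) + 1) * (B - 1) = ((r : ℤ) + 1) * B - ((r : ℤ) + 1) := by ring
  simp only [Int.ModEq]
  constructor
  · rintro ⟨h1, h2, h3⟩
    refine ⟨h1, ?_, ?_⟩ <;> omega
  · rintro ⟨h1, h2, h3⟩
    refine ⟨h1, ?_, ?_⟩ <;> omega
end

section
/- If r and n are both even (so that dim Φ = r(n-r)+n is even), then the three conditions r(n-r)+n = C(r+m-1,m-1), d·C(r+m-1,m-1) ≡ (r+1)(C(r+m-1,m-2)−1) mod 2, and C(r+m-1,m-2) ≡ n mod 2 cannot hold simultaneously for any integers d, m. -/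
/-- If `r` and `n` are both even (so `dim Φ = r(n-r)+n` is even), then the three
conditions `r(n-r)+n = C(r+m-1,m-1)`,
`d·C(r+m-1,m-1) ≡ (r+1)(C(r+m-1,m-2)-1) mod 2`, and
`C(r+m-1,m-2) ≡ n mod 2` cannot hold simultaneously. -/
theorem no_even_dim_rel_orientable
    (r n m d : ℕ) (hr : 0 < r) (hn : 0 < n) (hm : 0 < m) (hd : 0 < d)
    (hrn : r < n) (her : Even r) (hen : Even n) :
    ¬ (((r * (n - r) + n : ℕ) : ℤ) = chooseZ (r + m - 1) ((m : ℤ) - 1) ∧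
        (d : ℤ) * chooseZ (r + m - 1) ((m : ℤ) - 1) ≡
          ((r : ℤ) + 1) * (chooseZ (r + m - 1) ((m : ℤ) - 2) - 1) [ZMOD 2] ∧
        chooseZ (r + m - 1) ((m : ℤ) - 2) ≡ (n : ℤ) [ZMOD 2]) := by
  rintro ⟨h1, h2, h3⟩
  set A := chooseZ (r + m - 1) ((m : ℤ) - 1) with hAdef
  set B := chooseZ (r + m - 1) ((m : ℤ) - 2) with hBdef
  -- A is even
  have hA : (2 : ℤ) ∣ A := by
    rw [← h1]
    have : Even (r * (n - r) + n) := (her.mul_right _).add hen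
    exact_mod_cast this.two_dvd
  have hdA : (2 : ℤ) ∣ (d : ℤ) * A := hA.mul_left _
  have h2' : (2 : ℤ) ∣ ((r : ℤ) + 1) * (B - 1) - (d : ℤ) * A := h2.dvd
  have h5 : (2 : ℤ) ∣ ((r : ℤ) + 1) * (B - 1) := by
    have := dvd_add h2' hdA
    simpa using this
  obtain ⟨a, ha⟩ := her
  have hnot : ¬ (2 : ℤ) ∣ ((r : ℤ) + 1) := by
    rw [ha]; push_cast; omega
  have hB1 : (2 : ℤ) ∣ B - 1 := (Int.prime_two.dvd_mul.mp h5).resolve_left hnot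
  have h3' : (2 : ℤ) ∣ (n : ℤ) - B := h3.dvd
  obtain ⟨b, hb⟩ := hen
  have : (n : ℤ) = 2 * b := by rw [hb]; push_cast; ring
  omega
end

section
/- Let k be a field of characteristic ≠ 2, let A be the local ring of a smooth plane curve at a k-rational point with local parameter z, and let the second fundamental form be given locally by II = (D^{(2)}_z b)·dz⊗dz for some b ∈ A. Then the derivative (Jacobian) of the coefficient function satisfies d/dz(D^{(2)}_z b) = 3·D^{(3)}_z b; in particular the local index of II at a simple zero p is ⟨3·III(p)⟩ where III(p) = D^{(3)}_z b(p) is the third fundamental form evaluated at p. -/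
open Polynomial

/-- Let `k` be a field of characteristic `≠ 2`, and let the second fundamental
form of a smooth plane curve be given locally by `II = (D^{(2)}_z b)·dz⊗dz` for
an element `b` of the local ring (here modelled by a polynomial in the local
parameter `z`).  Then `d/dz (D^{(2)}_z b) = 3 · D^{(3)}_z b`; in particular, at
a simple rational zero `p` of `II`, the Jacobian of `II` equals `3·III(p)`
where `III(p) = (D^{(3)}_z b)(p)` is the third fundamental form at `p`, so the
local index of `II` at `p` is `⟨3·III(p)⟩ ∈ GW(k)`. -/
theorem jacobian_second_fundamental_form
    (k : Type*) [Field k] (hchar : ringChar k ≠ 2) (b : k[X]) :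
    derivative (hasseDeriv 2 b) = 3 • hasseDeriv 3 b ∧
    ∀ p : k, (hasseDeriv 2 b).eval p = 0 →
      (derivative (hasseDeriv 2 b)).eval p ≠ 0 →
      (derivative (hasseDeriv 2 b)).eval p = 3 * (hasseDeriv 3 b).eval p := by
  have h : derivative (hasseDeriv 2 b) = 3 • hasseDeriv 3 b := by
    rw [← hasseDeriv_one']
    have := Polynomial.hasseDeriv_comp (R := k) 1 2
    have h2 := congrFun (congrArg DFunLike.coe this) b
    simpa using h2
  refine ⟨h, fun p _ _ => ?_⟩
  rw [h]
  simp [mul_comm]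
end
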